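/- arXiv:1312.6276 — 9 statements merged into one kernel-verified Lean document; each statement's English description precedes it below -/
import Mathlib

section
/- For every real x with 0 < x < π/2, the inequalities 8/(π² − 4x²) < (tan x)/x < π²/(π² − 4x²) hold. -/
/-!
Clearing denominators, both inequalities say that a function vanishing at `0` and `π / 2` is
positive in between. Such a function is positive as soon as its derivative changes sign at most
once, from `+` to `-`. For the lower bound the derivative is `(π² - 8 - 4x²) cos x`. For the upper
bound it is `x h(x)` with `h(x) = 4x cos x - (π² - 8) sin x`; here `h(0) = 0` and `h'' < 0`, and a
strictly concave function vanishing at `0` stays negative once it is nonpositive.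
-/

open Real Set

lemma pos_of_deriv_pos_then_neg {f f' : ℝ → ℝ} {a b x : ℝ} (hf : ContinuousOn f (Icc a b))
    (hf' : ∀ y ∈ Ioo a b, HasDerivAt f (f' y) y)
    (hsign : ∀ t ∈ Ioo a b, ∀ y ∈ Ioo t b, f' t ≤ 0 → f' y < 0)
    (ha : 0 ≤ f a) (hb : 0 ≤ f b) (hx : x ∈ Ioo a b) : 0 < f x := by
  by_cases hpos : ∀ t ∈ Ioo a x, 0 < f' t
  · have hmono : StrictMonoOn f (Icc a x) := by
      refine strictMonoOn_of_hasDerivWithinAt_pos (f' := f') (convex_Icc a x)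
        (hf.mono (Icc_subset_Icc_right hx.2.le)) (fun y hy => ?_) (by rwa [interior_Icc])
      rw [interior_Icc] at hy
      exact (hf' y ⟨hy.1, hy.2.trans hx.2⟩).hasDerivWithinAt
    exact ha.trans_lt (hmono (left_mem_Icc.2 hx.1.le) (right_mem_Icc.2 hx.1.le) hx.1)
  · push Not at hpos
    obtain ⟨t, ht, hft⟩ := hpos
    have hanti : StrictAntiOn f (Icc x b) := by
      refine strictAntiOn_of_hasDerivWithinAt_neg (f' := f') (convex_Icc x b)
        (hf.mono (Icc_subset_Icc_left hx.1.le)) (fun y hy => ?_) (fun y hy => ?_) <;>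
        rw [interior_Icc] at hy
      · exact (hf' y ⟨hx.1.trans hy.1, hy.2⟩).hasDerivWithinAt
      · exact hsign t ⟨ht.1, ht.2.trans hx.2⟩ y ⟨ht.2.trans hy.1, hy.2⟩ hft
    exact hb.trans_lt (hanti (left_mem_Icc.2 hx.2.le) (right_mem_Icc.2 hx.2.le) hx.2)

lemma StrictConcaveOn.neg_of_nonpos_of_lt {s : Set ℝ} {φ : ℝ → ℝ} (hφ : StrictConcaveOn ℝ s φ)
    {a t y : ℝ} (ha : a ∈ s) (hy : y ∈ s) (hat : a < t) (hty : t < y) (hφa : 0 ≤ φ a)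
    (hφt : φ t ≤ 0) : φ y < 0 := by
  have ht : t ∈ s := hφ.1.ordConnected.out ha hy ⟨hat.le, hty.le⟩
  have hsecant := hφ.secant_strict_mono ha ht hy hat.ne' (hat.trans hty).ne' hty
  rw [div_lt_div_iff₀ (by linarith) (by linarith)] at hsecant
  nlinarith

namespace BeckerStark

noncomputable def lowerGap (x : ℝ) : ℝ := (π ^ 2 - 4 * x ^ 2) * sin x - 8 * x * cos x

noncomputable def upperGap (x : ℝ) : ℝ := π ^ 2 * x * cos x - (π ^ 2 - 4 * x ^ 2) * sin x

noncomputable def upperGapDerivFactor (x : ℝ) : ℝ := 4 * x * cos x - (π ^ 2 - 8) * sin x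

lemma hasDerivAt_lowerGap (x : ℝ) :
    HasDerivAt lowerGap ((π ^ 2 - 8 - 4 * x ^ 2) * cos x) x :=
  (((((hasDerivAt_pow 2 x).const_mul 4).const_sub (π ^ 2)).mul (hasDerivAt_sin x)).sub
    (((hasDerivAt_id x).const_mul 8).mul (hasDerivAt_cos x))).congr_deriv (by simp; ring)

lemma hasDerivAt_upperGap (x : ℝ) : HasDerivAt upperGap (x * upperGapDerivFactor x) x :=
  ((((hasDerivAt_id x).const_mul (π ^ 2)).mul (hasDerivAt_cos x)).sub
    ((((hasDerivAt_pow 2 x).const_mul 4).const_sub (π ^ 2)).mul (hasDerivAt_sin x))).congr_deriv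
    (by simp [upperGapDerivFactor]; ring)

lemma hasDerivAt_upperGapDerivFactor (x : ℝ) :
    HasDerivAt upperGapDerivFactor ((12 - π ^ 2) * cos x - 4 * x * sin x) x :=
  ((((hasDerivAt_id x).const_mul 4).mul (hasDerivAt_cos x)).sub
    ((hasDerivAt_sin x).const_mul (π ^ 2 - 8))).congr_deriv (by simp; ring)

lemma lowerGap_pos {x : ℝ} (hx : x ∈ Ioo 0 (π / 2)) : 0 < lowerGap x := by
  refine pos_of_deriv_pos_then_neg
    (continuous_iff_continuousAt.2 fun y => (hasDerivAt_lowerGap y).continuousAt).continuousOn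
    (fun y _ => hasDerivAt_lowerGap y) ?_ (by simp [lowerGap])
    (le_of_eq (by simp [lowerGap]; ring)) hx
  intro t ht y hy hft
  have hcos_t : 0 < cos t := cos_pos_of_mem_Ioo ⟨by linarith [ht.1, pi_pos], ht.2⟩
  have hcos_y : 0 < cos y := cos_pos_of_mem_Ioo ⟨by linarith [ht.1, hy.1, pi_pos], hy.2⟩
  have hfactor_t : π ^ 2 - 8 - 4 * t ^ 2 ≤ 0 := nonpos_of_mul_nonpos_left hft hcos_t
  exact mul_neg_of_neg_of_pos (by nlinarith [ht.1, hy.1]) hcos_y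

lemma strictConcaveOn_upperGapDerivFactor :
    StrictConcaveOn ℝ (Icc 0 (π / 2)) upperGapDerivFactor := by
  refine strictConcaveOn_of_deriv2_neg (convex_Icc _ _) (continuous_iff_continuousAt.2
    fun y => (hasDerivAt_upperGapDerivFactor y).continuousAt).continuousOn fun y hy => ?_
  rw [interior_Icc] at hy
  have hderiv2 :
      HasDerivAt (deriv upperGapDerivFactor) ((π ^ 2 - 16) * sin y - 4 * y * cos y) y := by
    rw [funext fun z => (hasDerivAt_upperGapDerivFactor z).deriv]
    exact (((hasDerivAt_cos y).const_mul (12 - π ^ 2)).sub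
      (((hasDerivAt_id y).const_mul 4).mul (hasDerivAt_sin y))).congr_deriv (by simp; ring)
  rw [Function.iterate_succ_apply, Function.iterate_one, hderiv2.deriv]
  have hsin : 0 < sin y := sin_pos_of_pos_of_lt_pi hy.1 (by linarith [hy.2, pi_pos])
  have hcos : 0 < cos y := cos_pos_of_mem_Ioo ⟨by linarith [hy.1, pi_pos], hy.2⟩
  have hpi : π ^ 2 - 16 < 0 := by nlinarith [pi_pos, pi_lt_four]
  nlinarith [mul_neg_of_neg_of_pos hpi hsin, mul_pos hy.1 hcos]

lemma upperGap_pos {x : ℝ} (hx : x ∈ Ioo 0 (π / 2)) : 0 < upperGap x := by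
  refine pos_of_deriv_pos_then_neg
    (continuous_iff_continuousAt.2 fun y => (hasDerivAt_upperGap y).continuousAt).continuousOn
    (fun y _ => hasDerivAt_upperGap y) ?_ (by simp [upperGap])
    (le_of_eq (by simp [upperGap]; ring)) hx
  intro t ht y hy hft
  have hfactor_y : upperGapDerivFactor y < 0 :=
    strictConcaveOn_upperGapDerivFactor.neg_of_nonpos_of_lt (left_mem_Icc.2 pi_div_two_pos.le)
      ⟨(ht.1.trans hy.1).le, hy.2.le⟩ ht.1 hy.1 (by simp [upperGapDerivFactor])
      (nonpos_of_mul_nonpos_right hft ht.1)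
  exact mul_neg_of_pos_of_neg (ht.1.trans hy.1) hfactor_y

end BeckerStark

theorem becker_stark (x : ℝ) (h0 : 0 < x) (h1 : x < π / 2) :
    8 / (π ^ 2 - 4 * x ^ 2) < Real.tan x / x ∧
    Real.tan x / x < π ^ 2 / (π ^ 2 - 4 * x ^ 2) := by
  have hlower := BeckerStark.lowerGap_pos ⟨h0, h1⟩
  have hupper := BeckerStark.upperGap_pos ⟨h0, h1⟩
  rw [BeckerStark.lowerGap] at hlower
  rw [BeckerStark.upperGap] at hupper
  have hden : 0 < π ^ 2 - 4 * x ^ 2 := by nlinarith [pi_pos]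
  have hcos : 0 < cos x := cos_pos_of_mem_Ioo ⟨by linarith, h1⟩
  rw [tan_eq_sin_div_cos, div_div, div_lt_div_iff₀ hden (by positivity),
    div_lt_div_iff₀ (by positivity) hden]
  constructor <;> nlinarith
end

section
/- The limit as x tends to π/2 from the left of (π²/(π² − 4x²) − (tan x)/x) is +∞. -/
/-!
Near `π / 2` write `cos x = (π / 2 - x) * sinc (π / 2 - x)`. Multiplying the gap
`π² / (π² - 4x²) - tan x / x` by `π / 2 - x` then gives
`π² / (2π + 4x) - sin x / (x * sinc (π / 2 - x))`, which is continuous at `π / 2` with value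
`π / 4 - 2 / π > 0` (as `π² > 8`). Hence the gap behaves like a positive multiple of
`(π / 2 - x)⁻¹`.
-/

open Real Filter Topology

theorem tendsto_inv_sub_nhdsLT {𝕜 : Type*} [Field 𝕜] [LinearOrder 𝕜] [IsStrictOrderedRing 𝕜]
    [TopologicalSpace 𝕜] [OrderTopology 𝕜] (a : 𝕜) :
    Tendsto (fun x => (a - x)⁻¹) (𝓝[<] a) atTop := by
  refine tendsto_inv_nhdsGT_zero.comp
    (tendsto_nhdsWithin_of_tendsto_nhds_of_eventually_within _ ?_ ?_)
  · simpa using ((tendsto_const_nhds.sub tendsto_id).mono_left nhdsWithin_le_nhds :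
      Tendsto (fun x => a - x) (𝓝[<] a) (𝓝 (a - a)))
  · filter_upwards [self_mem_nhdsWithin] with x hx
    exact sub_pos.2 hx

theorem Real.cos_eq_pi_div_two_sub_mul_sinc (x : ℝ) :
    cos x = (π / 2 - x) * sinc (π / 2 - x) := by
  rcases eq_or_ne (π / 2 - x) 0 with h | h
  · rw [h, zero_mul, ← cos_pi_div_two, sub_eq_zero.1 h]
  · rw [sinc_of_ne_zero h, mul_div_cancel₀ _ h, sin_pi_div_two_sub]

theorem Real.two_div_pi_lt_pi_div_four : 2 / π < π / 4 := by
  rw [div_lt_div_iff₀ pi_pos four_pos]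
  nlinarith [pi_gt_three]

noncomputable def beckerStarkGap (x : ℝ) : ℝ :=
  π ^ 2 / (π ^ 2 - 4 * x ^ 2) - tan x / x

theorem tendsto_pi_div_two_sub_mul_beckerStarkGap :
    Tendsto (fun x => (π / 2 - x) * beckerStarkGap x) (𝓝[<] (π / 2)) (𝓝 (π / 4 - 2 / π)) := by
  set g : ℝ → ℝ := fun x => π ^ 2 / (2 * π + 4 * x) - sin x / (x * sinc (π / 2 - x))
  have hg : ContinuousAt g (π / 2) := by
    refine (continuousAt_const.div (by fun_prop) (by positivity)).sub
      (continuous_sin.continuousAt.div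
        (continuousAt_id.mul (continuous_sinc.continuousAt.comp (by fun_prop))) ?_)
    simp [sinc_zero, pi_ne_zero]
  have hg_val : g (π / 2) = π / 4 - 2 / π := by
    simp only [g, sub_self, sinc_zero, sin_pi_div_two]
    field_simp
    ring
  refine (hg_val ▸ hg.tendsto.mono_left nhdsWithin_le_nhds).congr' ?_
  filter_upwards [Ioo_mem_nhdsLT (by positivity : (0 : ℝ) < π / 2)] with x ⟨hx0, hx⟩
  have hsub : π / 2 - x ≠ 0 := (sub_pos.2 hx).ne'
  have hsum : 2 * π + 4 * x ≠ 0 := by positivity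
  have hsinc : sinc (π / 2 - x) ≠ 0 := by
    intro h0
    have := cos_pos_of_mem_Ioo ⟨by linarith, hx⟩
    rw [cos_eq_pi_div_two_sub_mul_sinc, h0, mul_zero] at this
    exact this.false
  have hfactor : π ^ 2 - 4 * x ^ 2 = (π / 2 - x) * (2 * π + 4 * x) := by ring
  rw [beckerStarkGap, tan_eq_sin_div_cos, cos_eq_pi_div_two_sub_mul_sinc, hfactor]
  simp only [g]
  generalize π / 2 - x = d at hsub hsinc ⊢
  field_simp

theorem stmt1 :
    Tendsto (fun x : ℝ => π ^ 2 / (π ^ 2 - 4 * x ^ 2) - Real.tan x / x)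
      (𝓝[<] (π / 2)) atTop := by
  refine (tendsto_pi_div_two_sub_mul_beckerStarkGap.pos_mul_atTop
    (sub_pos.2 two_div_pi_lt_pi_div_four) (tendsto_inv_sub_nhdsLT _)).congr' ?_
  filter_upwards [self_mem_nhdsWithin] with x (hx : x < π / 2)
  rw [mul_comm, ← mul_assoc, inv_mul_cancel₀ (sub_pos.2 hx).ne', one_mul, beckerStarkGap]
end

section
/- For every x with 0.373 < x < π/2, one has (8 + a(x))/(π² − 4x²) < (tan x)/x, where a(x) = (8/π)(π/2 − x) + (16/π² − 8/3)(π/2 − x)². -/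
/-!
Put `t = π / 2 - x ∈ (0, 1.198)`. Since `tan x = cos t / sin t` and `π² - 4x² = 4t(π - t)`, the
claim becomes `(8 + a) (π/2 - t) sin t < cos t · 4t(π - t)`. For `t ≥ 0` the Taylor polynomials of
`sin` and `cos` alternately over- and under-estimate them (integrate the previous bound from `0`),
so it suffices to prove the claim with `sin t` replaced by `t - t³/6 + t⁵/120` and `cos t` by
`1 - t²/2 + t⁴/24 - t⁶/720`. The difference of the two sides of that polynomial inequality is
`t⁴ gapQuartic(t) / π²`, and `gapQuartic` is positive on `[0, 1.198]`.
-/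

open Real

lemma nonneg_of_hasDerivAt_nonneg {f f' : ℝ → ℝ} (hf : ∀ x, HasDerivAt f (f' x) x)
    (hf₀ : f 0 = 0) (hf' : ∀ x, 0 ≤ x → 0 ≤ f' x) {x : ℝ} (hx : 0 ≤ x) : 0 ≤ f x := by
  have hmono : MonotoneOn f (Set.Ici 0) :=
    monotoneOn_of_hasDerivWithinAt_nonneg (convex_Ici 0)
      (fun y _ => (hf y).continuousAt.continuousWithinAt) (fun y _ => (hf y).hasDerivWithinAt)
      (fun y hy => hf' y (by rw [interior_Ici] at hy; exact le_of_lt hy))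
  simpa [hf₀] using hmono Set.self_mem_Ici hx hx

namespace Real

/-- `sinTaylor n` and `cosTaylor n` consist of the first `n` nonzero terms of the Taylor series. -/
noncomputable def sinTaylor (n : ℕ) (x : ℝ) : ℝ :=
  ∑ k ∈ Finset.range n, (-1) ^ k * x ^ (2 * k + 1) / (2 * k + 1).factorial

noncomputable def cosTaylor (n : ℕ) (x : ℝ) : ℝ :=
  ∑ k ∈ Finset.range n, (-1) ^ k * x ^ (2 * k) / (2 * k).factorial

theorem hasDerivAt_sinTaylor (n : ℕ) (x : ℝ) : HasDerivAt (sinTaylor n) (cosTaylor n x) x := by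
  refine HasDerivAt.fun_sum fun k _ => ?_
  refine (((hasDerivAt_pow (2 * k + 1) x).const_mul ((-1 : ℝ) ^ k)).div_const
    ((2 * k + 1).factorial : ℝ)).congr_deriv ?_
  rw [Nat.factorial_succ]
  push_cast
  field_simp

theorem cosTaylor_succ (n : ℕ) (x : ℝ) : cosTaylor (n + 1) x =
    ∑ k ∈ Finset.range n, (-1) ^ (k + 1) * x ^ (2 * (k + 1)) / (2 * (k + 1)).factorial + 1 := by
  simp [cosTaylor, Finset.sum_range_succ']

theorem hasDerivAt_cosTaylor_succ (n : ℕ) (x : ℝ) :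
    HasDerivAt (cosTaylor (n + 1)) (-sinTaylor n x) x := by
  rw [funext (cosTaylor_succ n), sinTaylor, ← Finset.sum_neg_distrib]
  refine (HasDerivAt.fun_sum fun k _ => ?_).add_const 1
  refine (((hasDerivAt_pow (2 * (k + 1)) x).const_mul ((-1 : ℝ) ^ (k + 1))).div_const
    ((2 * (k + 1)).factorial : ℝ)).congr_deriv ?_
  rw [show 2 * (k + 1) = 2 * k + 1 + 1 by ring, Nat.factorial_succ]
  push_cast
  field_simp
  ring

theorem sinTaylor_zero_right (n : ℕ) : sinTaylor n 0 = 0 := by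
  simp [sinTaylor]

theorem cosTaylor_succ_zero_right (n : ℕ) : cosTaylor (n + 1) 0 = 1 := by
  simp [cosTaylor_succ]

theorem neg_one_pow_mul_sin_sub_sinTaylor_nonneg_of_cos {n : ℕ}
    (h : ∀ y, 0 ≤ y → 0 ≤ (-1) ^ n * (cos y - cosTaylor n y)) {x : ℝ} (hx : 0 ≤ x) :
    0 ≤ (-1) ^ n * (sin x - sinTaylor n x) :=
  nonneg_of_hasDerivAt_nonneg
    (fun y => ((hasDerivAt_sin y).sub (hasDerivAt_sinTaylor n y)).const_mul _)
    (by simp [sinTaylor_zero_right]) h hx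

theorem neg_one_pow_mul_cos_sub_cosTaylor_nonneg_of_sin {n : ℕ}
    (h : ∀ y, 0 ≤ y → 0 ≤ (-1) ^ n * (sin y - sinTaylor n y)) {x : ℝ} (hx : 0 ≤ x) :
    0 ≤ (-1) ^ (n + 1) * (cos x - cosTaylor (n + 1) x) :=
  nonneg_of_hasDerivAt_nonneg
    (fun y => (((hasDerivAt_cos y).sub (hasDerivAt_cosTaylor_succ n y)).const_mul _).congr_deriv
      (by ring))
    (by simp [cosTaylor_succ_zero_right]) h hx

theorem neg_one_pow_mul_cos_sub_cosTaylor_nonneg (n : ℕ) {x : ℝ} (hx : 0 ≤ x) :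
    0 ≤ (-1) ^ (n + 1) * (cos x - cosTaylor (n + 1) x) := by
  induction n generalizing x with
  | zero => simpa [cosTaylor] using cos_le_one x
  | succ n ih =>
    exact neg_one_pow_mul_cos_sub_cosTaylor_nonneg_of_sin
      (fun y hy => neg_one_pow_mul_sin_sub_sinTaylor_nonneg_of_cos (fun _ hz => ih hz) hy) hx

theorem neg_one_pow_mul_sin_sub_sinTaylor_nonneg (n : ℕ) {x : ℝ} (hx : 0 ≤ x) :
    0 ≤ (-1) ^ (n + 1) * (sin x - sinTaylor (n + 1) x) :=
  neg_one_pow_mul_sin_sub_sinTaylor_nonneg_of_cos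
    (fun _ hy => neg_one_pow_mul_cos_sub_cosTaylor_nonneg n hy) hx

theorem sin_le_quintic {x : ℝ} (hx : 0 ≤ x) : sin x ≤ x - x ^ 3 / 6 + x ^ 5 / 120 := by
  have := neg_one_pow_mul_sin_sub_sinTaylor_nonneg 2 hx
  norm_num [sinTaylor, Finset.sum_range_succ, Nat.factorial] at this
  linarith

theorem sextic_le_cos {x : ℝ} (hx : 0 ≤ x) :
    1 - x ^ 2 / 2 + x ^ 4 / 24 - x ^ 6 / 720 ≤ cos x := by
  have := neg_one_pow_mul_cos_sub_cosTaylor_nonneg 3 hx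
  norm_num [cosTaylor, Finset.sum_range_succ, Nat.factorial] at this
  linarith

end Real

noncomputable def gapQuartic (t : ℝ) : ℝ :=
  (16 - 4 * π ^ 2 / 3) - (4 * π ^ 3 / 45) * t + ((14 / 45) * π ^ 2 - 8 / 3) * t ^ 2
    + (π ^ 3 / 180) * t ^ 3 + (2 / 15 - π ^ 2 / 60) * t ^ 4

lemma gapQuartic_pos {t : ℝ} (ht0 : 0 ≤ t) (ht1 : t ≤ 1.198) : 0 < gapQuartic t := by
  have hπ₀ : 3.14159 < π := pi_gt_d6.trans' (by norm_num)
  have hπ₁ : π < 3.1416 := pi_lt_d4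
  have hπ2₀ : 9.8695 < π ^ 2 := by nlinarith
  have hπ2₁ : π ^ 2 < 9.8697 := by nlinarith
  have hπ3₀ : 31 < π ^ 3 := by nlinarith
  have hπ3₁ : π ^ 3 < 31.007 := by nlinarith
  -- the coefficients of `gapQuartic` are bounded below by those of this decimal quartic
  have hnum : 0 < 2.84 - 2.757 * t + 0.4 * t ^ 2 + 0.17 * t ^ 3 - 0.032 * t ^ 4 := by
    nlinarith [mul_nonneg ht0 (sub_nonneg.2 ht1), pow_nonneg ht0 3, pow_nonneg ht0 2]
  have ht2 := pow_nonneg ht0 2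
  have ht3 := pow_nonneg ht0 3
  have ht4 := pow_nonneg ht0 4
  rw [gapQuartic]
  nlinarith [mul_le_mul_of_nonneg_left hπ3₁.le ht0]

lemma quintic_mul_lt_sextic_mul {t : ℝ} (ht0 : 0 < t) (ht1 : t ≤ 1.198) :
    (8 + (8 / π * t + (16 / π ^ 2 - 8 / 3) * t ^ 2)) * (π / 2 - t)
        * (t - t ^ 3 / 6 + t ^ 5 / 120)
      < (1 - t ^ 2 / 2 + t ^ 4 / 24 - t ^ 6 / 720) * (4 * t * (π - t)) := by
  have hgap : π ^ 2 * ((1 - t ^ 2 / 2 + t ^ 4 / 24 - t ^ 6 / 720) * (4 * t * (π - t))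
      - (8 + (8 / π * t + (16 / π ^ 2 - 8 / 3) * t ^ 2)) * (π / 2 - t)
        * (t - t ^ 3 / 6 + t ^ 5 / 120))
      = t ^ 4 * gapQuartic t := by
    rw [gapQuartic]
    field_simp
    ring
  have := hgap ▸ mul_pos (pow_pos ht0 4) (gapQuartic_pos ht0.le ht1)
  exact sub_pos.1 (pos_of_mul_pos_right this (sq_nonneg π))

lemma mul_sin_lt_cos_mul {t : ℝ} (ht0 : 0 < t) (ht1 : t ≤ 1.198) :
    (8 + (8 / π * t + (16 / π ^ 2 - 8 / 3) * t ^ 2)) * (π / 2 - t) * sin t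
      < cos t * (4 * t * (π - t)) := by
  have hπ := pi_gt_three
  have hcoeff : 0 ≤ (8 + (8 / π * t + (16 / π ^ 2 - 8 / 3) * t ^ 2)) * (π / 2 - t) := by
    have : 0 ≤ 8 / π * t + 16 / π ^ 2 * t ^ 2 := by positivity
    refine mul_nonneg ?_ (by linarith)
    nlinarith
  calc _ ≤ (8 + (8 / π * t + (16 / π ^ 2 - 8 / 3) * t ^ 2)) * (π / 2 - t)
        * (t - t ^ 3 / 6 + t ^ 5 / 120) :=
        mul_le_mul_of_nonneg_left (sin_le_quintic ht0.le) hcoeff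
    _ < (1 - t ^ 2 / 2 + t ^ 4 / 24 - t ^ 6 / 720) * (4 * t * (π - t)) :=
        quintic_mul_lt_sextic_mul ht0 ht1
    _ ≤ cos t * (4 * t * (π - t)) :=
        mul_le_mul_of_nonneg_right (sextic_le_cos ht0.le) (by nlinarith)

theorem stmt3 (x : ℝ) (h0 : 0.373 < x) (h1 : x < π / 2) :
    (8 + ((8 / π) * (π / 2 - x) + (16 / π ^ 2 - 8 / 3) * (π / 2 - x) ^ 2)) /
      (π ^ 2 - 4 * x ^ 2) < Real.tan x / x := by
  obtain ⟨t, rfl⟩ : ∃ t, x = π / 2 - t := ⟨π / 2 - x, by ring⟩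
  have ht0 : 0 < t := by linarith
  have ht1 : t ≤ 1.198 := by linarith [pi_lt_d4]
  have hsin : 0 < sin t := sin_pos_of_pos_of_lt_pi ht0 (by linarith [pi_pos])
  rw [sub_sub_cancel, tan_eq_sin_div_cos, sin_pi_div_two_sub, cos_pi_div_two_sub, div_div,
    show π ^ 2 - 4 * (π / 2 - t) ^ 2 = 4 * t * (π - t) by ring,
    div_lt_div_iff₀ (by nlinarith) (mul_pos hsin (by linarith))]
  linarith [mul_sin_lt_cos_mul ht0 ht1]
end

section
/- The cubic polynomial u(x) = 144π³ − 15π⁵ + (432π² − 42π⁴)x + (96π³ − 432π − 4π⁵)x² + (8π⁴ − 96π² + 288)x³ is strictly positive for all x in (0.373, π/2). -/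
/-!
All three non-constant coefficients are positive, so the cubic is increasing on `[0, ∞)`, and it
suffices to check `u(0.373) > 0`. That value is only about `0.17` while its derivative in `π` is
about 4000, so six correct decimals of `π` are needed.
-/

open Real

lemma cubic_le_cubic_of_nonneg_coeffs (a b c d : ℝ) (hb : 0 ≤ b) (hc : 0 ≤ c) (hd : 0 ≤ d)
    {y x : ℝ} (hy : 0 ≤ y) (hyx : y ≤ x) :
    a + b * y + c * y ^ 2 + d * y ^ 3 ≤ a + b * x + c * x ^ 2 + d * x ^ 3 := by
  gcongr

lemma pi_pow_bounds {n : ℕ} (hn : n ≠ 0) : (3.141592 : ℝ) ^ n < π ^ n ∧ π ^ n < 3.141593 ^ n :=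
  ⟨pow_lt_pow_left₀ pi_gt_d6 (by norm_num) hn, pow_lt_pow_left₀ pi_lt_d6 pi_pos.le hn⟩

lemma cubic_coeffs_pos :
    0 < 432 * π ^ 2 - 42 * π ^ 4 ∧ 0 < 96 * π ^ 3 - 432 * π - 4 * π ^ 5 ∧
      0 < 8 * π ^ 4 - 96 * π ^ 2 + 288 := by
  refine ⟨?_, ?_, ?_⟩ <;>
    linarith [pi_gt_d6, pi_lt_d6, pi_pow_bounds two_ne_zero, pi_pow_bounds three_ne_zero,
      pi_pow_bounds four_ne_zero, pi_pow_bounds (n := 5) (by norm_num)]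

lemma cubic_pos_at_0373 :
    0 < 144 * π ^ 3 - 15 * π ^ 5 + (432 * π ^ 2 - 42 * π ^ 4) * 0.373 +
      (96 * π ^ 3 - 432 * π - 4 * π ^ 5) * 0.373 ^ 2 +
      (8 * π ^ 4 - 96 * π ^ 2 + 288) * 0.373 ^ 3 := by
  linarith [pi_gt_d6, pi_lt_d6, pi_pow_bounds two_ne_zero, pi_pow_bounds three_ne_zero,
      pi_pow_bounds four_ne_zero, pi_pow_bounds (n := 5) (by norm_num)]

theorem stmt6_general (x : ℝ) (h0 : 0.373 < x) :
    0 < 144 * π ^ 3 - 15 * π ^ 5 + (432 * π ^ 2 - 42 * π ^ 4) * x +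
      (96 * π ^ 3 - 432 * π - 4 * π ^ 5) * x ^ 2 +
      (8 * π ^ 4 - 96 * π ^ 2 + 288) * x ^ 3 := by
  obtain ⟨hb, hc, hd⟩ := cubic_coeffs_pos
  exact cubic_pos_at_0373.trans_le
    (cubic_le_cubic_of_nonneg_coeffs _ _ _ _ hb.le hc.le hd.le (by norm_num) h0.le)

theorem stmt6 (x : ℝ) (h0 : 0.373 < x) (h1 : x < π / 2) :
    0 < 144 * π ^ 3 - 15 * π ^ 5 + (432 * π ^ 2 - 42 * π ^ 4) * x +
      (96 * π ^ 3 - 432 * π - 4 * π ^ 5) * x ^ 2 +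
      (8 * π ^ 4 - 96 * π ^ 2 + 288) * x ^ 3 :=
  stmt6_general x h0
end

section
/- The quartic polynomial v(x) = 18π⁶ − 180π⁴ + (60π⁵ − 576π³)x + (864π² − 168π⁴ + 9π⁶)x² + (240π³ − 1152π − 12π⁵)x³ + (4π⁴ − 96π² + 576)x⁴ is strictly positive for all x in (0.301, π/2). -/
open Real

set_option maxHeartbeats 1000000 in
theorem stmt7 (x : ℝ) (h0 : 0.301 < x) (h1 : x < π / 2) :
    0 < 18 * π ^ 6 - 180 * π ^ 4 + (60 * π ^ 5 - 576 * π ^ 3) * x +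
      (864 * π ^ 2 - 168 * π ^ 4 + 9 * π ^ 6) * x ^ 2 +
      (240 * π ^ 3 - 1152 * π - 12 * π ^ 5) * x ^ 3 +
      (4 * π ^ 4 - 96 * π ^ 2 + 576) * x ^ 4 := by
  have pl : (3.141592 : ℝ) < π := Real.pi_gt_d6
  have pu : π < 3.141593 := Real.pi_lt_d6
  have hp2l : (9.869600 : ℝ) < π ^ 2 := by nlinarith
  have hp2u : π ^ 2 < 9.869607 := by nlinarith
  have hp3l : (31.006257 : ℝ) < π ^ 3 := by nlinarith
  have hp3u : π ^ 3 < 31.006287 := by nlinarith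
  have hp4l : (97.409009 : ℝ) < π ^ 4 := by nlinarith
  have hp4u : π ^ 4 < 97.409134 := by nlinarith
  have hp5l : (306.019366 : ℝ) < π ^ 5 := by nlinarith
  have hp5u : π ^ 5 < 306.019854 := by nlinarith
  have hp6l : (961.387993 : ℝ) < π ^ 6 := by nlinarith
  have hp6u : π ^ 6 < 961.389830 := by nlinarith
  have ha1 : (0 : ℝ) < 60 * π ^ 5 - 576 * π ^ 3 := by nlinarith
  have ha2 : (0 : ℝ) < 864 * π ^ 2 - 168 * π ^ 4 + 9 * π ^ 6 := by nlinarith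
  have ha3 : (0 : ℝ) < 240 * π ^ 3 - 1152 * π - 12 * π ^ 5 := by nlinarith
  have ha4 : (0 : ℝ) < 4 * π ^ 4 - 96 * π ^ 2 + 576 := by nlinarith
  have key : (0 : ℝ) < 18 * π ^ 6 - 180 * π ^ 4 + (60 * π ^ 5 - 576 * π ^ 3) * 0.301 +
      (864 * π ^ 2 - 168 * π ^ 4 + 9 * π ^ 6) * 0.301 ^ 2 +
      (240 * π ^ 3 - 1152 * π - 12 * π ^ 5) * 0.301 ^ 3 +
      (4 * π ^ 4 - 96 * π ^ 2 + 576) * 0.301 ^ 4 := by linarith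
  have hx0 : (0 : ℝ) < x := by linarith
  have hx2 : (0.301 : ℝ) ^ 2 < x ^ 2 := pow_lt_pow_left₀ h0 (by norm_num) (by norm_num)
  have hx3 : (0.301 : ℝ) ^ 3 < x ^ 3 := pow_lt_pow_left₀ h0 (by norm_num) (by norm_num)
  have hx4 : (0.301 : ℝ) ^ 4 < x ^ 4 := pow_lt_pow_left₀ h0 (by norm_num) (by norm_num)
  linarith [mul_lt_mul_of_pos_left h0 ha1, mul_lt_mul_of_pos_left hx2 ha2,
    mul_lt_mul_of_pos_left hx3 ha3, mul_lt_mul_of_pos_left hx4 ha4, key]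
end

section
/- The function f(x) = arctan( x·(8 + a(x))/(π² − 4x²) ) − x is strictly increasing on the interval (0.373, π/2), where a(x) = (8/π)(π/2 − x) + (16/π² − 8/3)(π/2 − x)². -/
/-!
Write the argument of `arctan` as `u = N / D` with `N x = x (8 + a x)` and `D x = π² - 4x²`.
Then `f' = u' / (1 + u²) - 1`, so `f` increases where `N' D - N D' > D² + N²`. The excess
`N' D - N D' - D² - N²` is a polynomial in `x` with a triple root at `π / 2`: it equals
`(π - 2x)³ q(x) / (9π⁴)` for an explicit cubic `q` whose coefficients of `x`, `x²`, `x³` are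
positive, and `q(0.373) > 0` (barely: the root of `q` is near `0.3728`), which a six-digit
enclosure of `π` certifies.
-/

open Real

theorem strictMonoOn_arctan_comp_sub_id {u u' : ℝ → ℝ} {s : Set ℝ} (hs : Convex ℝ s)
    (hso : IsOpen s) (hu : ∀ x ∈ s, HasDerivAt u (u' x) x)
    (hlt : ∀ x ∈ s, 1 + u x ^ 2 < u' x) :
    StrictMonoOn (fun x => arctan (u x) - x) s := by
  have hf (x) (hx : x ∈ s) :
      HasDerivAt (fun x => arctan (u x) - x) (1 / (1 + u x ^ 2) * u' x - 1) x :=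
    (hu x hx).arctan.sub (hasDerivAt_id x)
  refine strictMonoOn_of_deriv_pos hs (fun x hx => (hf x hx).continuousAt.continuousWithinAt) ?_
  intro x hx
  rw [hso.interior_eq] at hx
  rw [(hf x hx).deriv, sub_pos, one_div, inv_mul_eq_div, one_lt_div (by positivity)]
  exact hlt x hx

namespace ArctanApprox

noncomputable section

def a (x : ℝ) : ℝ := (8 / π) * (π / 2 - x) + (16 / π ^ 2 - 8 / 3) * (π / 2 - x) ^ 2

def num (x : ℝ) : ℝ := x * (8 + a x)

def den (x : ℝ) : ℝ := π ^ 2 - 4 * x ^ 2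

def num' (x : ℝ) : ℝ := 8 + a x - x * (8 / π + 2 * (16 / π ^ 2 - 8 / 3) * (π / 2 - x))

def q (x : ℝ) : ℝ :=
  144 * π ^ 3 - 15 * π ^ 5 + (432 * π ^ 2 - 42 * π ^ 4) * x
    + (-432 * π + 96 * π ^ 3 - 4 * π ^ 5) * x ^ 2 + (288 - 96 * π ^ 2 + 8 * π ^ 4) * x ^ 3

end

theorem hasDerivAt_num (x : ℝ) : HasDerivAt num (num' x) x := by
  have hlin : HasDerivAt (fun x : ℝ => π / 2 - x) (-1) x := (hasDerivAt_id x).const_sub _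
  have ha : HasDerivAt a (-(8 / π) - 2 * (16 / π ^ 2 - 8 / 3) * (π / 2 - x)) x := by
    refine ((hlin.const_mul (8 / π)).add ((hlin.pow 2).const_mul _)).congr_deriv ?_
    push_cast
    ring
  refine ((hasDerivAt_id' x).mul (ha.const_add 8)).congr_deriv ?_
  rw [num']
  ring

theorem hasDerivAt_den (x : ℝ) : HasDerivAt den (-(8 * x)) x := by
  refine (((hasDerivAt_pow 2 x).const_mul 4).const_sub (π ^ 2)).congr_deriv ?_
  push_cast
  ring

theorem den_pos {x : ℝ} (hx₀ : 0 < x) (hx : x < π / 2) : 0 < den x := by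
  have : 0 < (π - 2 * x) * (π + 2 * x) := mul_pos (by linarith) (by linarith)
  unfold den
  linarith

theorem excess_eq (x : ℝ) :
    9 * π ^ 4 * (num' x * den x - num x * -(8 * x) - den x ^ 2 - num x ^ 2)
      = (π - 2 * x) ^ 3 * q x := by
  have : π ≠ 0 := pi_ne_zero
  simp only [num', num, den, a, q]
  field_simp
  ring

theorem q_pos {x : ℝ} (hx₁ : 0.373 < x) : 0 < q x := by
  have h₁ : (3.141592 : ℝ) < π := pi_gt_d6
  have h₂ : π < 3.141593 := pi_lt_d6
  have hp2l : (9.8696002 : ℝ) < π ^ 2 := by nlinarith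
  have hp2u : π ^ 2 < 9.8696066 := by nlinarith
  have hp3l : (31.0062573 : ℝ) < π ^ 3 := by nlinarith
  have hp3u : π ^ 3 < 31.0062870 := by nlinarith
  have hp4l : (97.4090099 : ℝ) < π ^ 4 := by nlinarith
  have hp4u : π ^ 4 < 97.4091340 := by nlinarith
  have hp5l : (306.0193664 : ℝ) < π ^ 5 := by nlinarith
  have hp5u : π ^ 5 < 306.0198536 := by nlinarith
  have hx₀ : 0 < x := by linarith
  have hc₀ : (-125.3968 : ℝ) < 144 * π ^ 3 - 15 * π ^ 5 := by linarith
  have hc₁ : 172.4836 * x < (432 * π ^ 2 - 42 * π ^ 4) * x :=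
    mul_lt_mul_of_pos_right (by linarith) hx₀
  have hc₂ : 395.3531 * x ^ 2 < (-432 * π + 96 * π ^ 3 - 4 * π ^ 5) * x ^ 2 :=
    mul_lt_mul_of_pos_right (by linarith) (by positivity)
  have hc₃ : 119.7898 * x ^ 3 < (288 - 96 * π ^ 2 + 8 * π ^ 4) * x ^ 3 :=
    mul_lt_mul_of_pos_right (by linarith) (by positivity)
  have ht : 0 < x - 0.373 := by linarith
  have hmin : 0 < -125.3968 + 172.4836 * x + 395.3531 * x ^ 2 + 119.7898 * x ^ 3 := by
    nlinarith [mul_pos ht ht, mul_pos (mul_pos ht ht) ht]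
  unfold q
  linarith

theorem one_add_sq_lt_deriv {x : ℝ} (hx₁ : 0.373 < x) (hx₂ : x < π / 2) :
    1 + (num x / den x) ^ 2 < (num' x * den x - num x * -(8 * x)) / den x ^ 2 := by
  have hden := den_pos (by linarith) hx₂
  have hexcess : 0 < num' x * den x - num x * -(8 * x) - den x ^ 2 - num x ^ 2 := by
    have h := excess_eq x
    have : 0 < (π - 2 * x) ^ 3 * q x := mul_pos (pow_pos (by linarith) 3) (q_pos hx₁)
    have : (0 : ℝ) < 9 * π ^ 4 := by positivity
    nlinarith
  rw [lt_div_iff₀ (by positivity), add_mul, div_pow, div_mul_cancel₀ _ (by positivity)]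
  linarith

end ArctanApprox

theorem stmt9 :
    StrictMonoOn (fun x : ℝ =>
      Real.arctan (x * (8 + ((8 / π) * (π / 2 - x) + (16 / π ^ 2 - 8 / 3) * (π / 2 - x) ^ 2)) /
        (π ^ 2 - 4 * x ^ 2)) - x)
      (Set.Ioo 0.373 (π / 2)) := by
  have hden (x) (hx : x ∈ Set.Ioo (0.373 : ℝ) (π / 2)) : ArctanApprox.den x ≠ 0 :=
    (ArctanApprox.den_pos (by linarith [hx.1]) hx.2).ne'
  exact strictMonoOn_arctan_comp_sub_id (convex_Ioo _ _) isOpen_Ioo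
    (fun x hx => (ArctanApprox.hasDerivAt_num x).div (ArctanApprox.hasDerivAt_den x) (hden x hx))
    (fun x hx => ArctanApprox.one_add_sq_lt_deriv hx.1 hx.2)
end

section
/- The function g(x) = arctan( x·(8 + b(x))/(π² − 4x²) ) − x is strictly decreasing on the interval (0.301, π/2), where b(x) = (8/π)(π/2 − x) + (16/π² − 8/3)(π/2 − x)² + (32/π³ − 8/(3π))(π/2 − x)³. -/
/-!
Write `x ↦ x (8 + b x) / (π² - 4x²)` as `N / D`. Since `arctan' u = 1 / (1 + u²)`, the function
`arctan (N / D) - x` is strictly decreasing as soon as `N' D - N D' < D² + N²`. With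
`t = π/2 - x`, the polynomial `b` is chosen so that `N / D` agrees with `tan x` to high order
at `π/2`: the gap `D² + N² - (N' D - N D')` is exactly `t⁴ · gapQuartic t`. Bounding the
coefficients of `gapQuartic` through `π ≈ 3.141592` leaves a numerical quartic that is positive
for `t ≤ 1.2698`, i.e. for `x > 0.301`.
-/

open Real

theorem strictAntiOn_arctan_div_sub_id {N D N' D' : ℝ → ℝ} {s : Set ℝ}
    (hs : IsOpen s) (hconv : Convex ℝ s)
    (hN : ∀ x ∈ s, HasDerivAt N (N' x) x) (hD : ∀ x ∈ s, HasDerivAt D (D' x) x)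
    (hD0 : ∀ x ∈ s, D x ≠ 0)
    (hgap : ∀ x ∈ s, N' x * D x - N x * D' x < D x ^ 2 + N x ^ 2) :
    StrictAntiOn (fun x => arctan (N x / D x) - x) s := by
  have hderiv : ∀ x ∈ s, HasDerivAt (fun x => arctan (N x / D x) - x)
      (1 / (1 + (N x / D x) ^ 2) * ((N' x * D x - N x * D' x) / D x ^ 2) - 1) x :=
    fun x hx => (((hN x hx).div (hD x hx) (hD0 x hx)).arctan).sub (hasDerivAt_id x)
  refine strictAntiOn_of_deriv_neg hconv
    (fun x hx => (hderiv x hx).continuousAt.continuousWithinAt) fun x hx => ?_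
  rw [hs.interior_eq] at hx
  have hDsq : 0 < D x ^ 2 := sq_pos_of_ne_zero (hD0 x hx)
  rw [(hderiv x hx).deriv, sub_neg, one_div, inv_mul_lt_iff₀ (by positivity), mul_one,
    div_lt_iff₀ hDsq, add_mul, div_pow, div_mul_cancel₀ _ hDsq.ne', one_mul]
  exact hgap x hx

namespace TanApprox

noncomputable def b (x : ℝ) : ℝ :=
  (8 / π) * (π / 2 - x) + (16 / π ^ 2 - 8 / 3) * (π / 2 - x) ^ 2 +
    (32 / π ^ 3 - 8 / (3 * π)) * (π / 2 - x) ^ 3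

noncomputable def b' (x : ℝ) : ℝ :=
  -(8 / π) - 2 * (16 / π ^ 2 - 8 / 3) * (π / 2 - x) -
    3 * (32 / π ^ 3 - 8 / (3 * π)) * (π / 2 - x) ^ 2

noncomputable def gapQuartic (t : ℝ) : ℝ :=
  (160 / 3 - 640 / π ^ 2 + 16 / 9 * π ^ 2) + (512 / π ^ 3 - 128 / (3 * π) - 32 / 9 * π) * t +
    (256 / (3 * π ^ 2) - 16 / 3) * t ^ 2 + (-256 / (3 * π ^ 3) + 64 / (9 * π)) * t ^ 3 +
    (1024 / π ^ 6 - 512 / (3 * π ^ 4) + 64 / (9 * π ^ 2)) * t ^ 4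

theorem hasDerivAt_b (x : ℝ) : HasDerivAt b (b' x) x := by
  have ht : HasDerivAt (fun y : ℝ => π / 2 - y) (-1) x := by
    simpa using (hasDerivAt_id x).const_sub (π / 2)
  have hb := ((ht.const_mul (8 / π)).add ((ht.pow 2).const_mul (16 / π ^ 2 - 8 / 3))).add
    ((ht.pow 3).const_mul (32 / π ^ 3 - 8 / (3 * π)))
  exact hb.congr_deriv (by simp only [b']; push_cast; ring)

theorem gap_eq (x : ℝ) :
    (π ^ 2 - 4 * x ^ 2) ^ 2 + (x * (8 + b x)) ^ 2 -
        ((8 + b x + x * b' x) * (π ^ 2 - 4 * x ^ 2) - x * (8 + b x) * (-8 * x)) =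
      (π / 2 - x) ^ 4 * gapQuartic (π / 2 - x) := by
  have hπ : π ≠ 0 := pi_ne_zero
  simp only [b, b', gapQuartic]
  field_simp
  ring

theorem quartic_lower_bound_pos {t : ℝ} (h1 : t ≤ 1.2698) :
    0 < 6.0336 - 8.2386 * t + 3.31273 * t ^ 2 - 0.4886 * t ^ 3 + 0.0335 * t ^ 4 := by
  nlinarith [sq_nonneg (t - 1.2698), sq_nonneg (t - 1), sq_nonneg t, sq_nonneg (t - 1.2),
    sq_nonneg (t * t - t)]

theorem gapQuartic_pos {t : ℝ} (h0 : 0 ≤ t) (h1 : t ≤ 1.2698) : 0 < gapQuartic t := by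
  have hπl : (3.141592 : ℝ) < π := pi_gt_d6
  have hπu : π < 3.141593 := pi_lt_d6
  have hπ2l : (9.8696002 : ℝ) < π ^ 2 := by nlinarith
  have hπ2u : π ^ 2 < 9.8696066 := by nlinarith
  have hπ3l : (31.006257 : ℝ) < π ^ 3 := by nlinarith
  have hπ4l : (97.409009 : ℝ) < π ^ 4 := by nlinarith
  have hπ4u : π ^ 4 < 97.409134 := by nlinarith
  have hπ6u : π ^ 6 < 961.38983 := by nlinarith
  have hc0 : (6.0336 : ℝ) ≤ 160 / 3 - 640 / π ^ 2 + 16 / 9 * π ^ 2 := by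
    rw [show (160 : ℝ) / 3 - 640 / π ^ 2 + 16 / 9 * π ^ 2 =
      (480 * π ^ 2 - 5760 + 16 * π ^ 4) / (9 * π ^ 2) by field_simp; ring,
      le_div_iff₀ (by positivity)]
    linarith
  have hc1 : (-8.2386 : ℝ) ≤ 512 / π ^ 3 - 128 / (3 * π) - 32 / 9 * π := by
    rw [show (512 : ℝ) / π ^ 3 - 128 / (3 * π) - 32 / 9 * π =
      (4608 - 384 * π ^ 2 - 32 * π ^ 4) / (9 * π ^ 3) by field_simp; ring,
      le_div_iff₀ (by positivity)]
    linarith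
  have hc2 : (3.31273 : ℝ) ≤ 256 / (3 * π ^ 2) - 16 / 3 := by
    rw [show (256 : ℝ) / (3 * π ^ 2) - 16 / 3 = (256 - 16 * π ^ 2) / (3 * π ^ 2) by field_simp,
      le_div_iff₀ (by positivity)]
    linarith
  have hc3 : (-0.4886 : ℝ) ≤ -256 / (3 * π ^ 3) + 64 / (9 * π) := by
    rw [show (-256 : ℝ) / (3 * π ^ 3) + 64 / (9 * π) = (-768 + 64 * π ^ 2) / (9 * π ^ 3) by
      field_simp; ring, le_div_iff₀ (by positivity)]
    linarith
  have hc4 : (0.0335 : ℝ) ≤ 1024 / π ^ 6 - 512 / (3 * π ^ 4) + 64 / (9 * π ^ 2) := by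
    rw [show (1024 : ℝ) / π ^ 6 - 512 / (3 * π ^ 4) + 64 / (9 * π ^ 2) =
      (9216 - 1536 * π ^ 2 + 64 * π ^ 4) / (9 * π ^ 6) by field_simp; ring,
      le_div_iff₀ (by positivity)]
    linarith
  have := quartic_lower_bound_pos h1
  unfold gapQuartic
  linarith [mul_le_mul_of_nonneg_right hc1 h0, mul_le_mul_of_nonneg_right hc2 (pow_nonneg h0 2),
    mul_le_mul_of_nonneg_right hc3 (pow_nonneg h0 3),
    mul_le_mul_of_nonneg_right hc4 (pow_nonneg h0 4)]

end TanApprox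

theorem stmt10 :
    StrictAntiOn (fun x : ℝ =>
      Real.arctan (x * (8 + ((8 / π) * (π / 2 - x) + (16 / π ^ 2 - 8 / 3) * (π / 2 - x) ^ 2 +
        (32 / π ^ 3 - 8 / (3 * π)) * (π / 2 - x) ^ 3)) / (π ^ 2 - 4 * x ^ 2)) - x)
      (Set.Ioo 0.301 (π / 2)) := by
  have hπu : π < 3.141593 := pi_lt_d6
  have hden : ∀ x ∈ Set.Ioo (0.301 : ℝ) (π / 2), 0 < π ^ 2 - 4 * x ^ 2 := by
    rintro x ⟨hx0, hx1⟩
    nlinarith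
  refine strictAntiOn_arctan_div_sub_id (N := fun x => x * (8 + TanApprox.b x))
    (N' := fun x => 8 + TanApprox.b x + x * TanApprox.b' x) (D' := fun x => -8 * x)
    isOpen_Ioo (convex_Ioo _ _)
    (fun x _ => ((hasDerivAt_id x).mul ((TanApprox.hasDerivAt_b x).const_add 8)).congr_deriv
      (by simp))
    (fun x _ => ((hasDerivAt_pow 2 x).const_mul 4).const_sub _ |>.congr_deriv (by ring))
    (fun x hx => (hden x hx).ne') fun x hx => ?_
  obtain ⟨hx0, hx1⟩ := hx
  rw [← sub_pos, TanApprox.gap_eq]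
  exact mul_pos (pow_pos (by linarith) 4) (TanApprox.gapQuartic_pos (by linarith) (by linarith))
end

section
/- The function h(x) = arctan( x·(π² − (4 − π²/3)x² − (4/3 − 2π²/15)x⁴)/(π² − 4x²) ) − x is strictly increasing on (0, 1.371), and h(0) = 0. -/
/-!
The quotient `N x / D x` inside the arctangent is a rational approximation of `tan x` with the same poles
`± π / 2`, chosen so that `arctan (N x / D x) - x` vanishes to order seven at `0`. Accordingly the
numerator `N' D - N D' - (D² + N²)` of the derivative of `arctan (N / D) - x` is `x⁶ q(x²)` for a
quadratic `q`, and `q` is positive on `[0, 1.371²]` once `π²` is pinned between `9.8696002` and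
`9.8696066`; the value of `q` at `1.371²` is only about `5 · 10⁻⁵`.
-/

open Real Set

lemma strictMonoOn_arctan_div_sub_id {s : Set ℝ} (hs : Convex ℝ s) (hso : IsOpen s)
    {N D N' D' : ℝ → ℝ} (hN : ∀ x ∈ s, HasDerivAt N (N' x) x)
    (hD : ∀ x ∈ s, HasDerivAt D (D' x) x) (hD0 : ∀ x ∈ s, D x ≠ 0)
    (hlt : ∀ x ∈ s, D x ^ 2 + N x ^ 2 < N' x * D x - N x * D' x) :
    StrictMonoOn (fun x => arctan (N x / D x) - x) s := by
  have hderiv : ∀ x ∈ s, HasDerivAt (fun x => arctan (N x / D x) - x)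
      (1 / (1 + (N x / D x) ^ 2) * ((N' x * D x - N x * D' x) / D x ^ 2) - 1) x :=
    fun x hx => (((hN x hx).div (hD x hx) (hD0 x hx)).arctan).sub (hasDerivAt_id x)
  refine strictMonoOn_of_deriv_pos hs
    (fun x hx => (hderiv x hx).continuousAt.continuousWithinAt) fun x hx => ?_
  rw [hso.interior_eq] at hx
  have hDx := hD0 x hx
  have hsum : 0 < D x ^ 2 + N x ^ 2 := by positivity
  have hform : 1 / (1 + (N x / D x) ^ 2) * ((N' x * D x - N x * D' x) / D x ^ 2) =
      (N' x * D x - N x * D' x) / (D x ^ 2 + N x ^ 2) := by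
    field_simp
  rw [(hderiv x hx).deriv, hform, sub_pos, one_lt_div hsum]
  exact hlt x hx

lemma pi_sq_gt : (9.8696002 : ℝ) < π ^ 2 := by
  nlinarith [pi_gt_d6]

lemma pi_sq_lt : π ^ 2 < (9.8696066 : ℝ) := by
  nlinarith [pi_lt_d6, pi_gt_d6]

noncomputable def tanApproxNum (x : ℝ) : ℝ :=
  x * (π ^ 2 - (4 - π ^ 2 / 3) * x ^ 2 - (4 / 3 - 2 * π ^ 2 / 15) * x ^ 4)

noncomputable def tanApproxDen (x : ℝ) : ℝ :=
  π ^ 2 - 4 * x ^ 2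

lemma hasDerivAt_tanApproxNum (x : ℝ) :
    HasDerivAt tanApproxNum
      (π ^ 2 - 3 * (4 - π ^ 2 / 3) * x ^ 2 - 5 * (4 / 3 - 2 * π ^ 2 / 15) * x ^ 4) x := by
  refine ((hasDerivAt_id' x).mul (((hasDerivAt_const x (π ^ 2)).sub
    ((hasDerivAt_pow 2 x).const_mul (4 - π ^ 2 / 3))).sub
    ((hasDerivAt_pow 4 x).const_mul (4 / 3 - 2 * π ^ 2 / 15)))).congr_deriv ?_
  norm_num
  ring

lemma hasDerivAt_tanApproxDen (x : ℝ) : HasDerivAt tanApproxDen (-(8 * x)) x := by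
  refine ((hasDerivAt_const x (π ^ 2)).sub ((hasDerivAt_pow 2 x).const_mul 4)).congr_deriv ?_
  norm_num
  ring

lemma tanApproxDen_pos {x : ℝ} (hx : |x| < π / 2) : 0 < tanApproxDen x := by
  have hsq : x ^ 2 < (π / 2) ^ 2 := sq_lt_sq' (abs_lt.mp hx).1 (abs_lt.mp hx).2
  unfold tanApproxDen
  linarith

lemma tanApprox_excess_pos {t : ℝ} (ht0 : 0 ≤ t) (ht1 : t ≤ 1.371 ^ 2) :
    0 < (56 / 15 * π ^ 2 - 17 / 45 * π ^ 4) +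
      (-32 / 3 + 88 / 45 * π ^ 2 - 4 / 45 * π ^ 4) * t -
      (4 / 3 - 2 * π ^ 2 / 15) ^ 2 * t ^ 2 := by
  have hlo := pi_sq_gt
  have hhi := pi_sq_lt
  have hprod : 0 ≤ (π ^ 2 - 9.8696002) * (9.8696066 - π ^ 2) :=
    mul_nonneg (by linarith) (by linarith)
  have hlin : -32 / 3 + 88 / 45 * π ^ 2 - 4 / 45 * π ^ 4 < 0 := by nlinarith
  have ht2 : t ^ 2 ≤ (1.371 ^ 2) ^ 2 := by nlinarith
  nlinarith [mul_le_mul_of_nonpos_left ht1 hlin.le,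
    mul_le_mul_of_nonneg_left ht2 (sq_nonneg (4 / 3 - 2 * π ^ 2 / 15))]

lemma tanApproxDen_sq_add_tanApproxNum_sq_lt {x : ℝ} (hx : x ∈ Ioo 0 1.371) :
    tanApproxDen x ^ 2 + tanApproxNum x ^ 2 <
      (π ^ 2 - 3 * (4 - π ^ 2 / 3) * x ^ 2 - 5 * (4 / 3 - 2 * π ^ 2 / 15) * x ^ 4) *
        tanApproxDen x - tanApproxNum x * -(8 * x) := by
  have hexcess : (π ^ 2 - 3 * (4 - π ^ 2 / 3) * x ^ 2 - 5 * (4 / 3 - 2 * π ^ 2 / 15) * x ^ 4) *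
        tanApproxDen x - tanApproxNum x * -(8 * x) - (tanApproxDen x ^ 2 + tanApproxNum x ^ 2) =
      x ^ 6 * ((56 / 15 * π ^ 2 - 17 / 45 * π ^ 4) +
        (-32 / 3 + 88 / 45 * π ^ 2 - 4 / 45 * π ^ 4) * x ^ 2 -
        (4 / 3 - 2 * π ^ 2 / 15) ^ 2 * (x ^ 2) ^ 2) := by
    unfold tanApproxNum tanApproxDen
    ring
  have hq := tanApprox_excess_pos (sq_nonneg x) (pow_le_pow_left₀ hx.1.le hx.2.le 2)
  have hpos := mul_pos (pow_pos hx.1 6) hq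
  linarith

theorem stmt11 :
    StrictMonoOn (fun x : ℝ =>
      Real.arctan (x * (π ^ 2 - (4 - π ^ 2 / 3) * x ^ 2 - (4 / 3 - 2 * π ^ 2 / 15) * x ^ 4) /
        (π ^ 2 - 4 * x ^ 2)) - x) (Set.Ioo 0 1.371) ∧
    Real.arctan (0 * (π ^ 2 - (4 - π ^ 2 / 3) * 0 ^ 2 - (4 / 3 - 2 * π ^ 2 / 15) * 0 ^ 4) /
        (π ^ 2 - 4 * 0 ^ 2)) - 0 = 0 := by
  have hlt_half_pi : ∀ x ∈ Ioo (0 : ℝ) 1.371, |x| < π / 2 := fun x hx => by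
    rw [abs_of_pos hx.1]
    linarith [hx.2, pi_gt_three]
  refine ⟨strictMonoOn_arctan_div_sub_id (convex_Ioo 0 1.371) isOpen_Ioo
    (fun x _ => hasDerivAt_tanApproxNum x) (fun x _ => hasDerivAt_tanApproxDen x)
    (fun x hx => (tanApproxDen_pos (hlt_half_pi x hx)).ne')
    fun x hx => tanApproxDen_sq_add_tanApproxNum_sq_lt hx, by simp⟩
end

section
/- The limit as x tends to π/2 from the left of ((tan x)·(π² − 4x²)/x − 8)/(π/2 − x) equals 8/π. -/
/-!
With `u = π/2 - x` one has `tan x = cot u` and `π² - 4x² = 2u(π + 2x)`, so the quotient equals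
`-2 · (1 - u cot u)/u · (π + 2x)/x + 4/x`. The elementary bounds `0 ≤ 1 - u cot u ≤ π u²/4`
on `(0, π/2)` make the first term vanish in the limit, leaving `4/(π/2) = 8/π`.
-/

open Real Filter Topology

namespace Real

lemma mul_cot_lt_one {u : ℝ} (h0 : 0 < u) (hπ : u < π / 2) : u * cot u < 1 := by
  have hcos : 0 < cos u := cos_pos_of_mem_Ioo ⟨by linarith, hπ⟩
  rw [cot_eq_cos_div_sin, mul_div_assoc', div_lt_one (sin_pos_of_pos_of_lt_pi h0 (by linarith))]
  have := lt_tan h0 hπ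
  rwa [tan_eq_sin_div_cos, lt_div_iff₀ hcos] at this

lemma one_sub_mul_cot_le {u : ℝ} (h0 : 0 < u) (hπ : u ≤ π / 2) :
    1 - u * cot u ≤ π / 4 * u ^ 2 := by
  have hsin : 2 / π * u ≤ sin u := mul_le_sin h0.le hπ
  have hsin0 : 0 < sin u := lt_of_lt_of_le (by positivity) hsin
  have hnum : sin u - u * cos u ≤ u ^ 3 / 2 := by
    nlinarith [sin_le h0.le, one_sub_sq_div_two_le_cos (x := u)]
  rw [cot_eq_cos_div_sin, mul_div_assoc', one_sub_div hsin0.ne', div_le_iff₀ hsin0]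
  calc sin u - u * cos u ≤ u ^ 3 / 2 := hnum
    _ = π / 4 * u ^ 2 * (2 / π * u) := by field_simp; ring
    _ ≤ π / 4 * u ^ 2 * sin u := by gcongr

lemma tendsto_one_sub_mul_cot_div_self :
    Tendsto (fun u => (1 - u * cot u) / u) (𝓝[>] 0) (𝓝 0) := by
  have hlin : Tendsto (fun u : ℝ => π / 4 * u) (𝓝[>] 0) (𝓝 0) := by
    simpa using ((continuous_const_mul (π / 4)).tendsto 0).mono_left nhdsWithin_le_nhds
  refine squeeze_zero' ?_ ?_ hlin <;>
    filter_upwards [Ioo_mem_nhdsGT (by positivity : (0 : ℝ) < π / 2)] with u ⟨h0, hπ⟩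
  · exact div_nonneg (by linarith [mul_cot_lt_one h0 hπ]) h0.le
  · rw [div_le_iff₀ h0]
    linarith [one_sub_mul_cot_le h0 hπ.le]

lemma tan_eq_cot_pi_div_two_sub (x : ℝ) : tan x = cot (π / 2 - x) := by
  rw [tan_eq_sin_div_cos, cot_eq_cos_div_sin, cos_pi_div_two_sub, sin_pi_div_two_sub]

end Real

lemma tan_mul_sq_sub_div_sub_eq {x : ℝ} (hx : x ≠ 0) (hx' : x ≠ π / 2) :
    (tan x * (π ^ 2 - 4 * x ^ 2) / x - 8) / (π / 2 - x) =
      -2 * ((1 - (π / 2 - x) * cot (π / 2 - x)) / (π / 2 - x)) * ((π + 2 * x) / x) + 4 / x := by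
  have hu : π - 2 * x ≠ 0 := by contrapose! hx'; linarith
  rw [tan_eq_cot_pi_div_two_sub]
  field_simp
  ring

theorem stmt16 :
    Tendsto (fun x : ℝ => (Real.tan x * (π ^ 2 - 4 * x ^ 2) / x - 8) / (π / 2 - x))
      (𝓝[<] (π / 2)) (𝓝 (8 / π)) := by
  have hu : Tendsto (fun x : ℝ => π / 2 - x) (𝓝[<] (π / 2)) (𝓝[>] 0) := by
    have h := map_subLeft_nhdsLT (c := π / 2) (a := π / 2)
    rw [sub_self] at h
    exact h.le
  have hcot := tendsto_one_sub_mul_cot_div_self.comp hu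
  have hrat : Tendsto (fun x : ℝ => (π + 2 * x) / x) (𝓝[<] (π / 2)) (𝓝 _) :=
    (ContinuousAt.tendsto (by fun_prop (disch := positivity))).mono_left nhdsWithin_le_nhds
  have hinv : Tendsto (fun x : ℝ => 4 / x) (𝓝[<] (π / 2)) (𝓝 (4 / (π / 2))) :=
    (ContinuousAt.tendsto (by fun_prop (disch := positivity))).mono_left nhdsWithin_le_nhds
  have hlim := ((hcot.const_mul (-2)).mul hrat).add hinv
  rw [mul_zero, zero_mul, zero_add, show (4 : ℝ) / (π / 2) = 8 / π by ring] at hlim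
  refine hlim.congr' ?_
  filter_upwards [Ioo_mem_nhdsLT (by positivity : (0 : ℝ) < π / 2)] with x hx
  exact (tan_mul_sq_sub_div_sub_eq hx.1.ne' hx.2.ne).symm
end
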